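/- arXiv:2008.13623 — 2 statements merged into one kernel-verified Lean document; each statement's English description precedes it below -/
import Mathlib

section
/- Let H be a real Hilbert space, let A, B ∈ Conv_H with ρ := e(A,B) < ∞, and define F : [0,1] → Conv_H by F(0) := A and F(t) := B + D_{(1−t)ρ} for 0 < t ≤ 1. Let y₀ ∈ A, let t₀ ∈ [0,1] satisfy ‖y₀ − Proj_B(y₀)‖ = (1 − t₀)ρ, and define y : [0,1] → H by y(t) := y₀ for t ∈ [0,t₀), y(t) := y₀ + ((t − t₀)/(1 − t₀))(Proj_B(y₀) − y₀) for t ∈ [t₀,1) when t₀ ≠ 1, and y(1) := Proj_B(y₀). Then y is Lipschitz continuous on [0,1] and satisfies: y(t) ∈ F(t) for all t ∈ [0,1]; −y′(t) ∈ N_{F(t)}(y(t)) for Lebesgue-a.e. t ∈ [0,1]; and y(0) = Proj_{F(0)}(y₀) = y₀. That is, y is the unique solution of the sweeping process driven by F with initial condition y₀. -/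
open Filter Metric Set MeasureTheory Topology Function
open scoped ENNReal NNReal Pointwise

variable {H : Type*} [NormedAddCommGroup H] [InnerProductSpace ℝ H]

/-- A nonempty closed convex subset of `H` (an element of `Conv_H`). -/
def IsConvexBody (K : Set H) : Prop := K.Nonempty ∧ IsClosed K ∧ Convex ℝ K

/-- The excess `e(A,B) = sup_{x ∈ A} dist(x,B)` of `A` over `B`. -/
noncomputable def excess (A B : Set H) : ℝ≥0∞ := ⨆ x ∈ A, EMetric.infEdist x B

/-- The retraction `ret(C,J)` of the moving set `C` on `J`. -/
noncomputable def ret (C : ℝ → Set H) (J : Set ℝ) : ℝ≥0∞ :=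
  ⨆ (m : ℕ) (t : Fin (m + 1) → ℝ) (_ : StrictMono t) (_ : ∀ i, t i ∈ J),
    ∑ i : Fin m, excess (C (t (Fin.castSucc i))) (C (t (Fin.succ i)))

/-- `C` has locally bounded retraction on `[0,∞)`. -/
def LocBddRet (C : ℝ → Set H) : Prop := ∀ a b : ℝ, 0 ≤ a → ret C (Icc a b) ≠ ⊤

/-- The pointwise variation of `f` on `J`. -/
noncomputable def pVar (f : ℝ → H) (J : Set ℝ) : ℝ≥0∞ :=
  ⨆ (m : ℕ) (t : Fin (m + 1) → ℝ) (_ : StrictMono t) (_ : ∀ i, t i ∈ J),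
    ∑ i : Fin m, edist (f (t (Fin.castSucc i))) (f (t (Fin.succ i)))

/-- `f` has locally bounded variation on `[0,∞)`. -/
def LocBV (f : ℝ → H) : Prop := ∀ a b : ℝ, 0 ≤ a → pVar f (Icc a b) ≠ ⊤

/-- The exterior normal cone `N_K(x)`. -/
def normalCone (K : Set H) (x : H) : Set H :=
  {u : H | ∀ v ∈ K, (inner ℝ (v - x) u : ℝ) ≤ 0}

/-- `p` is the metric projection of `x` onto `K`. -/
def IsProj (K : Set H) (x p : H) : Prop :=
  p ∈ K ∧ ∀ v ∈ K, ‖x - p‖ ≤ ‖x - v‖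

/-- `C(t+) = {x : dist(x, C(s)) → 0 as s → t+}`. -/
def rightLimSet (C : ℝ → Set H) (t : ℝ) : Set H :=
  {x : H | Tendsto (fun s => infDist x (C s)) (𝓝[>] t) (𝓝 0)}

/-- `C(t−)`, with the convention `C(0−) := C(0)`. -/
noncomputable def leftLimSet (C : ℝ → Set H) (t : ℝ) : Set H :=
  if t = 0 then C 0 else {x : H | Tendsto (fun s => infDist x (C s)) (𝓝[<] t) (𝓝 0)}

/-- The continuity set of `C` with respect to the excess. -/
noncomputable def contSet (C : ℝ → Set H) : Set ℝ :=
  {t | excess (C t) (rightLimSet C t) = 0 ∧ excess (leftLimSet C t) (C t) = 0}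

/-!
Write `y t = p + c t • (y₀ - p)` with `c t = (1 - max t t₀) / (1 - t₀)`. Then
`‖y t - p‖ = (1 - max t t₀) ρ ≤ (1 - t) ρ`, so `y t ∈ B + D_{(1-t)ρ}`; after `t₀` the constraint
is active and `-y'` points along `y₀ - p`, which is normal to `B + D_{‖y t - p‖}` at `y t` because
`p` is the projection of `y₀` on the convex set `B`.

For uniqueness, if `w` and `y` are two solutions then `‖w - y‖²` is Lipschitz with a.e. derivative
`2 ⟪w - y, w' - y'⟫ ≤ 0` by monotonicity of the normal cone, so by the fundamental theorem of
calculus for absolutely continuous functions it stays at its initial value `0`.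
-/

theorem AbsolutelyContinuousOnInterval.apply_le_apply_of_ae_deriv_nonpos {f : ℝ → ℝ} {a b : ℝ}
    (hab : a ≤ b) (hf : AbsolutelyContinuousOnInterval f a b)
    (hf' : ∀ᵐ t, t ∈ Ioo a b → deriv f t ≤ 0) : f b ≤ f a := by
  rw [← sub_nonpos, ← hf.integral_deriv_eq_sub, ← neg_nonneg, ← intervalIntegral.integral_neg]
  refine intervalIntegral.integral_nonneg_of_ae_restrict hab ?_
  rw [EventuallyLE, ae_restrict_iff' measurableSet_Icc]
  filter_upwards [hf', volume.ae_ne a, volume.ae_ne b] with t ht hta htb htab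
  exact neg_nonneg.mpr (ht ⟨htab.1.lt_of_ne' hta, htab.2.lt_of_ne htb⟩)

theorem LipschitzOnWith.norm_sq {α E : Type*} [PseudoMetricSpace α] [SeminormedAddCommGroup E]
    {u : α → E} {s : Set α} {K M : ℝ≥0} (hu : LipschitzOnWith K u s)
    (hM : ∀ t ∈ s, ‖u t‖ ≤ M) : LipschitzOnWith (2 * M * K) (fun t => ‖u t‖ ^ 2) s := by
  refine LipschitzOnWith.of_dist_le_mul fun t ht r hr => ?_
  have hsum : ‖u t‖ + ‖u r‖ ≤ 2 * M := by linarith [hM t ht, hM r hr]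
  calc dist (‖u t‖ ^ 2) (‖u r‖ ^ 2) = |‖u t‖ - ‖u r‖| * (‖u t‖ + ‖u r‖) := by
        rw [Real.dist_eq, sq_sub_sq, abs_mul, abs_of_nonneg (by positivity), mul_comm]
    _ ≤ dist (u t) (u r) * (2 * M) := by
        gcongr
        rw [dist_eq_norm]
        exact abs_norm_sub_norm_le _ _
    _ ≤ K * dist t r * (2 * M) := by gcongr; exact hu.dist_le_mul t ht r hr
    _ = ↑(2 * M * K) * dist t r := by push_cast; ring

theorem zero_mem_normalCone (K : Set H) (x : H) : (0 : H) ∈ normalCone K x := by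
  simp [normalCone]

theorem smul_mem_normalCone {K : Set H} {x u : H} {c : ℝ} (hc : 0 ≤ c)
    (hu : u ∈ normalCone K x) : c • u ∈ normalCone K x := fun v hv => by
  rw [real_inner_smul_right]
  exact mul_nonpos_of_nonneg_of_nonpos hc (hu v hv)

theorem inner_sub_sub_nonneg_of_mem_normalCone {K : Set H} {x z u v : H} (hx : x ∈ K) (hz : z ∈ K)
    (hu : u ∈ normalCone K x) (hv : v ∈ normalCone K z) : 0 ≤ (inner ℝ (x - z) (u - v) : ℝ) := by
  have hzx := hu z hz
  have hxz := hv x hx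
  rw [← neg_sub x z, inner_neg_left] at hzx
  rw [inner_sub_right]
  linarith

theorem IsProj.inner_sub_le_zero {K : Set H} {x p v : H} (hK : Convex ℝ K) (hp : IsProj K x p)
    (hv : v ∈ K) : (inner ℝ (x - p) (v - p) : ℝ) ≤ 0 := by
  have : Nonempty K := ⟨⟨p, hp.1⟩⟩
  have hmin : ‖x - p‖ = ⨅ w : K, ‖x - w‖ :=
    le_antisymm (le_ciInf fun w => hp.2 w w.2)
      (ciInf_le (⟨0, by rintro _ ⟨w, rfl⟩; exact norm_nonneg _⟩ :
        BddBelow (range fun w : K => ‖x - w‖)) ⟨p, hp.1⟩)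
  exact (norm_eq_iInf_iff_real_inner_le_zero hK hp.1).mp hmin v hv

theorem isProj_self {E : Type*} [NormedAddCommGroup E] {K : Set E} {x : E} (hx : x ∈ K) :
    IsProj K x x :=
  ⟨hx, fun v _ => by simp⟩

theorem IsProj.sub_mem_normalCone_add_closedBall {B : Set H} {x p : H} (hB : Convex ℝ B)
    (hp : IsProj B x p) (c : ℝ) :
    x - p ∈ normalCone (B + closedBall 0 (c * ‖x - p‖)) (p + c • (x - p)) := by
  rintro _ ⟨b, hb, u, hu, rfl⟩
  rw [mem_closedBall_zero_iff] at hu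
  have hbp := hp.inner_sub_le_zero hB hb
  have hup : (inner ℝ u (x - p) : ℝ) ≤ c * ‖x - p‖ * ‖x - p‖ :=
    (real_inner_le_norm u _).trans (by gcongr)
  have hsplit : b + u - (p + c • (x - p)) = (b - p) + u - c • (x - p) := by abel
  rw [hsplit, inner_sub_left, inner_add_left, real_inner_smul_left, real_inner_self_eq_norm_sq,
    real_inner_comm, sq]
  linarith

def IsSweepingSolution (C : ℝ → Set H) (a b : ℝ) (x : ℝ → H) : Prop :=
  (∃ L : ℝ≥0, LipschitzOnWith L x (Icc a b)) ∧ (∀ t ∈ Icc a b, x t ∈ C t) ∧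
    ∀ᵐ t ∂(volume : Measure ℝ), t ∈ Icc a b →
      ∃ d : H, HasDerivWithinAt x d (Icc a b) t ∧ -d ∈ normalCone (C t) (x t)

namespace IsSweepingSolution

variable {C : ℝ → Set H} {a b : ℝ} {x y : ℝ → H}

theorem congr (hx : IsSweepingSolution C a b x) (hxy : EqOn x y (Icc a b)) :
    IsSweepingSolution C a b y := by
  obtain ⟨⟨L, hL⟩, hmem, hderiv⟩ := hx
  refine ⟨⟨L, fun s hs t ht => ?_⟩, fun t ht => hxy ht ▸ hmem t ht, ?_⟩
  · rw [← hxy hs, ← hxy ht]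
    exact hL hs ht
  · filter_upwards [hderiv] with t ht htab
    obtain ⟨d, hd, hdC⟩ := ht htab
    exact ⟨d, hd.congr (fun s hs => (hxy hs).symm) (hxy htab).symm, hxy htab ▸ hdC⟩

theorem eqOn (hx : IsSweepingSolution C a b x) (hy : IsSweepingSolution C a b y)
    (h₀ : x a = y a) : EqOn x y (Icc a b) := by
  obtain ⟨⟨Lx, hLx⟩, hxC, hx'⟩ := hx
  obtain ⟨⟨Ly, hLy⟩, hyC, hy'⟩ := hy
  intro t ht
  set g : ℝ → ℝ := fun s => ‖x s - y s‖ ^ 2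
  have hbdd : ∃ M : ℝ≥0, ∀ s ∈ Icc a b, ‖x s - y s‖ ≤ M := by
    obtain ⟨M, hM⟩ := isCompact_Icc.exists_bound_of_continuousOn (hLx.sub hLy).continuousOn
    exact ⟨M.toNNReal, fun s hs => (hM s hs).trans (Real.le_coe_toNNReal M)⟩
  obtain ⟨M, hM⟩ := hbdd
  have hg : AbsolutelyContinuousOnInterval g a t := by
    refine LipschitzOnWith.absolutelyContinuousOnInterval (K := 2 * M * (Lx + Ly)) ?_
    rw [uIcc_of_le ht.1]
    exact ((hLx.sub hLy).norm_sq hM).mono (Icc_subset_Icc_right ht.2)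
  have hg' : ∀ᵐ s, s ∈ Ioo a t → deriv g s ≤ 0 := by
    filter_upwards [hx', hy'] with s hxs hys hs
    have hs' : s ∈ Icc a b := ⟨hs.1.le, hs.2.le.trans ht.2⟩
    have hnhds : Icc a b ∈ 𝓝 s := Icc_mem_nhds hs.1 (hs.2.trans_le ht.2)
    obtain ⟨dx, hdx, hdxC⟩ := hxs hs'
    obtain ⟨dy, hdy, hdyC⟩ := hys hs'
    have hgs : HasDerivAt g (2 * inner ℝ (x s - y s) (dx - dy)) s :=
      ((hdx.hasDerivAt hnhds).sub (hdy.hasDerivAt hnhds)).norm_sq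
    rw [hgs.deriv]
    have hmono := inner_sub_sub_nonneg_of_mem_normalCone (hxC s hs') (hyC s hs') hdxC hdyC
    rw [neg_sub_neg, ← neg_sub dx, inner_neg_right, neg_nonneg] at hmono
    exact mul_nonpos_of_nonneg_of_nonpos zero_le_two hmono
  have hgt : g t ≤ 0 := by
    simpa [g, h₀] using hg.apply_le_apply_of_ae_deriv_nonpos ht.1 hg'
  exact sub_eq_zero.mp (by simpa [g] using hgt)

end IsSweepingSolution

/-- Constant `x` up to time `t₀`, then affine to `p`, reached at time `1`. For `t₀ = 1` the
coefficient is the junk value `a / 0 = 0`; the lemmas below then have `x = p`. -/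
noncomputable def delayedSegment (p x : H) (t₀ t : ℝ) : H :=
  p + ((1 - max t t₀) / (1 - t₀)) • (x - p)

section DelayedSegment

variable {B : Set H} {p x : H} {t₀ ρ t : ℝ}

theorem delayedSegment_of_le (hx : ‖x - p‖ = (1 - t₀) * ρ) (ht : t ≤ t₀) :
    delayedSegment p x t₀ t = x := by
  rw [delayedSegment, max_eq_right ht]
  rcases eq_or_ne (1 - t₀) 0 with h | h
  · have hxp : x - p = 0 := by rw [← norm_eq_zero, hx, h, zero_mul]
    rw [hxp, smul_zero, add_zero, sub_eq_zero.mp hxp]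
  · rw [div_self h, one_smul, add_sub_cancel]

theorem delayedSegment_of_ge (ht : t₀ ≤ t) :
    delayedSegment p x t₀ t = p + ((1 - t) / (1 - t₀)) • (x - p) := by
  rw [delayedSegment, max_eq_left ht]

theorem delayedSegment_one (ht₀ : t₀ ≤ 1) : delayedSegment p x t₀ 1 = p := by
  simp [delayedSegment_of_ge ht₀]

theorem lipschitzWith_delayedSegment :
    LipschitzWith (‖x - p‖₊ / ‖1 - t₀‖₊) (delayedSegment p x t₀) := by
  refine LipschitzWith.of_dist_le_mul fun s t => ?_
  have hmax := abs_max_sub_max_le_abs t s t₀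
  calc dist (delayedSegment p x t₀ s) (delayedSegment p x t₀ t)
      = |max t t₀ - max s t₀| / |1 - t₀| * ‖x - p‖ := by
        rw [dist_eq_norm, delayedSegment, delayedSegment, add_sub_add_left_eq_sub, ← sub_smul,
          norm_smul, div_sub_div_same, Real.norm_eq_abs, abs_div, sub_sub_sub_cancel_left]
    _ ≤ |s - t| / |1 - t₀| * ‖x - p‖ := by rw [abs_sub_comm s t]; gcongr
    _ = ↑(‖x - p‖₊ / ‖1 - t₀‖₊) * dist s t := by
        rw [NNReal.coe_div, coe_nnnorm, coe_nnnorm, Real.norm_eq_abs, Real.dist_eq]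
        ring

theorem norm_delayedSegment_sub (hx : ‖x - p‖ = (1 - t₀) * ρ) (ht₀ : t₀ ≤ 1) (ht : t ≤ 1) :
    ‖delayedSegment p x t₀ t - p‖ = (1 - max t t₀) * ρ := by
  have hcoef : 0 ≤ (1 - max t t₀) / (1 - t₀) :=
    div_nonneg (sub_nonneg.mpr (max_le ht ht₀)) (sub_nonneg.mpr ht₀)
  rw [delayedSegment, add_sub_cancel_left, norm_smul, Real.norm_of_nonneg hcoef, hx]
  rcases ht₀.lt_or_eq with ht₀ | rfl
  · field_simp [(sub_pos.mpr ht₀).ne']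
  · simp [max_eq_right ht]

theorem hasDerivAt_delayedSegment_of_lt (hx : ‖x - p‖ = (1 - t₀) * ρ) (ht : t < t₀) :
    HasDerivAt (delayedSegment p x t₀) 0 t :=
  (hasDerivAt_const t x).congr_of_eventuallyEq
    (eventually_of_mem (Iio_mem_nhds ht) fun _ hs => delayedSegment_of_le hx (le_of_lt hs))

theorem hasDerivAt_delayedSegment_of_gt (ht : t₀ < t) :
    HasDerivAt (delayedSegment p x t₀) ((-1 / (1 - t₀)) • (x - p)) t := by
  have hline : HasDerivAt (fun s => p + ((1 - s) / (1 - t₀)) • (x - p))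
      ((-1 / (1 - t₀)) • (x - p)) t := by
    simpa using
      ((((hasDerivAt_id t).const_sub 1).div_const (1 - t₀)).smul_const (x - p)).const_add p
  exact hline.congr_of_eventuallyEq
    (eventually_of_mem (Ioi_mem_nhds ht) fun _ hs => delayedSegment_of_ge (le_of_lt hs))

theorem eqOn_delayedSegment {y : ℝ → H} (ht₀ : t₀ ≤ 1) (hx : ‖x - p‖ = (1 - t₀) * ρ)
    (hy₁ : ∀ t : ℝ, 0 ≤ t → t < t₀ → y t = x)
    (hy₂ : t₀ ≠ 1 → ∀ t : ℝ, t₀ ≤ t → t < 1 → y t = x + ((t - t₀) / (1 - t₀)) • (p - x))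
    (hy₃ : y 1 = p) : EqOn y (delayedSegment p x t₀) (Icc 0 1) := by
  rintro t ⟨h0, h1⟩
  rcases h1.lt_or_eq with h1 | rfl
  · rcases lt_or_ge t t₀ with ht | ht
    · rw [hy₁ t h0 ht, delayedSegment_of_le hx ht.le]
    · have hne : 1 - t₀ ≠ 0 := by linarith
      rw [hy₂ (by linarith) t ht h1, delayedSegment_of_ge ht]
      have hcoef : (1 - t) / (1 - t₀) = 1 - (t - t₀) / (1 - t₀) := by field_simp; ring
      rw [hcoef]
      module
  · rw [hy₃, delayedSegment_one ht₀]

theorem isSweepingSolution_delayedSegment {F : ℝ → Set H} (hB : Convex ℝ B) (hp : IsProj B x p)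
    (hρ : 0 ≤ ρ) (ht₀ : t₀ ∈ Icc (0 : ℝ) 1) (hx : ‖x - p‖ = (1 - t₀) * ρ) (hF₀ : x ∈ F 0)
    (hF : ∀ t : ℝ, 0 < t → t ≤ 1 → F t = B + closedBall (0 : H) ((1 - t) * ρ)) :
    IsSweepingSolution F 0 1 (delayedSegment p x t₀) := by
  refine ⟨⟨_, lipschitzWith_delayedSegment.lipschitzOnWith⟩, fun t ht => ?_, ?_⟩
  · rcases ht.1.eq_or_lt with rfl | h0
    · rwa [delayedSegment_of_le hx ht₀.1]
    · rw [hF t h0 ht.2]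
      refine ⟨p, hp.1, _, ?_, add_sub_cancel p _⟩
      rw [mem_closedBall_zero_iff, norm_delayedSegment_sub hx ht₀.2 ht.2]
      exact mul_le_mul_of_nonneg_right (by linarith [le_max_left t t₀]) hρ
  · filter_upwards [volume.ae_ne t₀] with t hne ht
    rcases hne.lt_or_gt with h | h
    · exact ⟨0, (hasDerivAt_delayedSegment_of_lt hx h).hasDerivWithinAt,
        by simpa using zero_mem_normalCone _ _⟩
    · refine ⟨_, (hasDerivAt_delayedSegment_of_gt h).hasDerivWithinAt, ?_⟩
      have hne : 1 - t₀ ≠ 0 := by linarith [ht.2]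
      have hradius : (1 - t) / (1 - t₀) * ‖x - p‖ = (1 - t) * ρ := by
        rw [hx]; field_simp
      rw [hF t (ht₀.1.trans_lt h) ht.2, delayedSegment_of_ge h.le, ← hradius, ← neg_smul,
        neg_div, neg_neg]
      exact smul_mem_normalCone (one_div_nonneg.mpr (by linarith [ht.2]))
        (hp.sub_mem_normalCone_add_closedBall hB _)

end DelayedSegment

theorem sweeping_process_of_excess_geodesic_general
    (A B : Set H) (hB : IsConvexBody B)
    (ρ : ℝ) (hρ0 : 0 ≤ ρ)
    (F : ℝ → Set H) (hF0 : F 0 = A)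
    (hF : ∀ t : ℝ, 0 < t → t ≤ 1 → F t = B + Metric.closedBall (0 : H) ((1 - t) * ρ))
    (y₀ : H) (hy₀ : y₀ ∈ A)
    (p : H) (hp : IsProj B y₀ p)
    (t₀ : ℝ) (ht₀ : t₀ ∈ Icc (0:ℝ) 1) (ht₀' : ‖y₀ - p‖ = (1 - t₀) * ρ)
    (y : ℝ → H)
    (hy1 : ∀ t : ℝ, 0 ≤ t → t < t₀ → y t = y₀)
    (hy2 : t₀ ≠ 1 → ∀ t : ℝ, t₀ ≤ t → t < 1 → y t = y₀ + ((t - t₀) / (1 - t₀)) • (p - y₀))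
    (hy3 : y 1 = p) :
    (∃ L : ℝ≥0, LipschitzOnWith L y (Icc 0 1)) ∧
    (∀ t ∈ Icc (0:ℝ) 1, y t ∈ F t) ∧
    (∀ᵐ t ∂(volume : Measure ℝ), t ∈ Icc (0:ℝ) 1 →
      ∃ d : H, HasDerivWithinAt y d (Icc 0 1) t ∧ -d ∈ normalCone (F t) (y t)) ∧
    (y 0 = y₀ ∧ IsProj (F 0) y₀ (y 0)) ∧
    (∀ w : ℝ → H, (∃ L : ℝ≥0, LipschitzOnWith L w (Icc 0 1)) →
      (∀ t ∈ Icc (0:ℝ) 1, w t ∈ F t) →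
      (∀ᵐ t ∂(volume : Measure ℝ), t ∈ Icc (0:ℝ) 1 →
        ∃ d : H, HasDerivWithinAt w d (Icc 0 1) t ∧ -d ∈ normalCone (F t) (w t)) →
      w 0 = y₀ → EqOn w y (Icc 0 1)) := by
  have hyeq := eqOn_delayedSegment ht₀.2 ht₀' hy1 hy2 hy3
  have hsol : IsSweepingSolution F 0 1 y :=
    (isSweepingSolution_delayedSegment hB.2.2 hp hρ0 ht₀ ht₀' (hF0 ▸ hy₀) hF).congr hyeq.symm
  have hy0 : y 0 = y₀ := (hyeq ⟨le_rfl, zero_le_one⟩).trans (delayedSegment_of_le ht₀' ht₀.1)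
  refine ⟨hsol.1, hsol.2.1, hsol.2.2, ⟨hy0, by rw [hy0, hF0]; exact isProj_self hy₀⟩, ?_⟩
  exact fun w hwlip hwmem hwderiv hw0 =>
    IsSweepingSolution.eqOn ⟨hwlip, hwmem, hwderiv⟩ hsol (hw0.trans hy0.symm)

/-- Lemma 6.3: the solution of the sweeping process driven by the geodesic
`F(0) = A`, `F(t) = B + D_{(1−t)ρ}` (`ρ = e(A,B)`) with initial datum `y₀ ∈ A` is the
straight line segment which is constant equal to `y₀` until the time `t₀` determined by
`‖y₀ − Proj_B(y₀)‖ = (1 − t₀)ρ`, and then moves affinely to `Proj_B(y₀)`; moreover it is the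
unique solution. -/
theorem sweeping_process_of_excess_geodesic
    [CompleteSpace H]
    (A B : Set H) (hA : IsConvexBody A) (hB : IsConvexBody B)
    (ρ : ℝ) (hρ0 : 0 ≤ ρ) (hρ : excess A B = ENNReal.ofReal ρ)
    (F : ℝ → Set H) (hF0 : F 0 = A)
    (hF : ∀ t : ℝ, 0 < t → t ≤ 1 → F t = B + Metric.closedBall (0 : H) ((1 - t) * ρ))
    (y₀ : H) (hy₀ : y₀ ∈ A)
    (p : H) (hp : IsProj B y₀ p)
    (t₀ : ℝ) (ht₀ : t₀ ∈ Icc (0:ℝ) 1) (ht₀' : ‖y₀ - p‖ = (1 - t₀) * ρ)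
    (y : ℝ → H)
    (hy1 : ∀ t : ℝ, 0 ≤ t → t < t₀ → y t = y₀)
    (hy2 : t₀ ≠ 1 → ∀ t : ℝ, t₀ ≤ t → t < 1 → y t = y₀ + ((t - t₀) / (1 - t₀)) • (p - y₀))
    (hy3 : y 1 = p) :
    (∃ L : ℝ≥0, LipschitzOnWith L y (Icc 0 1)) ∧
    (∀ t ∈ Icc (0:ℝ) 1, y t ∈ F t) ∧
    (∀ᵐ t ∂(volume : Measure ℝ), t ∈ Icc (0:ℝ) 1 →
      ∃ d : H, HasDerivWithinAt y d (Icc 0 1) t ∧ -d ∈ normalCone (F t) (y t)) ∧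
    (y 0 = y₀ ∧ IsProj (F 0) y₀ (y 0)) ∧
    (∀ w : ℝ → H, (∃ L : ℝ≥0, LipschitzOnWith L w (Icc 0 1)) →
      (∀ t ∈ Icc (0:ℝ) 1, w t ∈ F t) →
      (∀ᵐ t ∂(volume : Measure ℝ), t ∈ Icc (0:ℝ) 1 →
        ∃ d : H, HasDerivWithinAt w d (Icc 0 1) t ∧ -d ∈ normalCone (F t) (w t)) →
      w 0 = y₀ → EqOn w y (Icc 0 1)) :=
  sweeping_process_of_excess_geodesic_general A B hB ρ hρ0 F hF0 hF y₀ hy₀ p hp t₀ ht₀ ht₀' y hy1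
    hy2 hy3
end

section
/- Let H be a real Hilbert space and let C : I → Conv_H have locally bounded retraction, with ℓ_C(t) := ret(C, [inf I, t] ∩ I). Then for every t ∈ I: (a) the sets C(t+) := {x ∈ H : lim_{s→t+} dist(x,C(s)) = 0} and C(t−) := {x ∈ H : lim_{s→t−} dist(x,C(s)) = 0} are nonempty, closed and convex; (b) e(C(t),C(t+)) = lim_{s→t+} e(C(t),C(s)) = ℓ_C(t+) − ℓ_C(t) and e(C(t−),C(t)) = lim_{s→t−} e(C(s),C(t)) = ℓ_C(t) − ℓ_C(t−); consequently lim_{s→t+} e(C(t),C(s)) = 0 if and only if C(t) ⊆ C(t+), and lim_{s→t−} e(C(s),C(t)) = 0 if and only if C(t−) ⊆ C(t). -/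
open Filter Metric Set MeasureTheory Topology Function
open scoped ENNReal NNReal Classical

variable {H : Type*} [NormedAddCommGroup H] [InnerProductSpace ℝ H]

/-- The right limit `h(t+)` of `h` along the interval `I`, with the convention
`h(sup I +) := h(sup I)` when `sup I ∈ I` (for `h` nondecreasing on `I`). -/
noncomputable def rlimOn (h : ℝ → ℝ) (I : Set ℝ) (t : ℝ) : ℝ :=
  if (I ∩ Ioi t).Nonempty then sInf (h '' (I ∩ Ioi t)) else h t

/-- The left limit `h(t−)` of `h` along the interval `I`, with the convention
`h(inf I −) := h(inf I)` when `inf I ∈ I` (for `h` nondecreasing on `I`). -/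
noncomputable def llimOn (h : ℝ → ℝ) (I : Set ℝ) (t : ℝ) : ℝ :=
  if (I ∩ Iio t).Nonempty then sSup (h '' (I ∩ Iio t)) else h t

/-- `C(t+) = {x : dist(x,C(s)) → 0 as s → t+ in I}`, with the convention
`C(sup I +) := C(sup I)` when `sup I ∈ I`. -/
noncomputable def rightLimSetOn (C : ℝ → Set H) (I : Set ℝ) (t : ℝ) : Set H :=
  if (I ∩ Ioi t).Nonempty then
    {x : H | Tendsto (fun s => infDist x (C s)) (𝓝[I ∩ Ioi t] t) (𝓝 0)}
  else C t

/-- `C(t−) = {x : dist(x,C(s)) → 0 as s → t− in I}`, with the convention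
`C(inf I −) := C(inf I)` when `inf I ∈ I`. -/
noncomputable def leftLimSetOn (C : ℝ → Set H) (I : Set ℝ) (t : ℝ) : Set H :=
  if (I ∩ Iio t).Nonempty then
    {x : H | Tendsto (fun s => infDist x (C s)) (𝓝[I ∩ Iio t] t) (𝓝 0)}
  else C t

/-!
Superadditivity of the retraction, `ℓ(a) + e(C a, C b) ≤ ℓ(b)` for `a ≤ b`, makes `ℓ = L`
nondecreasing and bounds `e(C a, C b)` by `ℓ(b) - ℓ(a)`. Conversely, splitting a chain that almost
realises `ℓ(s)` at `t` yields points `r` arbitrarily close to `t` with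
`e(C t, C r) ≥ ℓ(r) - ℓ(t) - ε` (and symmetrically on the left), so the one-sided limits of the
excesses are the jumps of `ℓ`.

`C(t+)` is the intersection over `r > t` of the closed `(ℓ(r) - ℓ(t+))`-neighbourhoods of `C(r)`,
a nested family of closed convex sets. In a Hilbert space the metric projections of `x ∈ C(t)`
onto these sets form a Cauchy sequence by the parallelogram law; their limit lies in `C(t+)` at
distance at most `ℓ(t+) - ℓ(t)` from `x`. For `C(t-)`, a point of `C(r)`, `r < t`, is moved
along `C(σ n)` with `σ n ↑ t` by steps bounded by the increments of `ℓ`; by completeness this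
converges to a point of `C(t-)` at distance at most `ℓ(t-) - ℓ(r)`. The reverse inequalities for
the excesses follow from the triangle inequality for `e`.
-/

section Excess

variable {E : Type*} [NormedAddCommGroup E] {A B D : Set E}

lemma excess_le_iff {c : ℝ≥0∞} : excess A B ≤ c ↔ ∀ x ∈ A, infEDist x B ≤ c :=
  iSup₂_le_iff

lemma infEDist_le_excess {x : E} (hx : x ∈ A) : infEDist x B ≤ excess A B :=
  le_iSup₂ (f := fun y (_ : y ∈ A) => infEDist y B) x hx

lemma excess_eq_zero_iff_subset (hB : IsClosed B) : excess A B = 0 ↔ A ⊆ B := by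
  rw [← nonpos_iff_eq_zero, excess_le_iff]
  simp only [nonpos_iff_eq_zero, ← mem_closure_iff_infEDist_zero, hB.closure_eq]
  rfl

lemma excess_self (A : Set E) : excess A A = 0 :=
  le_antisymm (excess_le_iff.2 fun _ hx => (infEDist_zero_of_mem hx).le) bot_le

lemma infEDist_le_infEDist_add_excess (x : E) : infEDist x D ≤ infEDist x B + excess B D := by
  refine ENNReal.le_of_forall_pos_le_add fun ε hε hlt => ?_
  have hB : infEDist x B ≠ ⊤ := ne_top_of_le_ne_top hlt.ne le_self_add
  obtain ⟨b, hb, hxb⟩ := infEDist_lt_iff.1 (ENNReal.lt_add_right hB (ENNReal.coe_ne_zero.2 hε.ne'))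
  calc infEDist x D ≤ edist x b + infEDist b D := infEDist_le_edist_add_infEDist
    _ ≤ (infEDist x B + ε) + excess B D := add_le_add hxb.le (infEDist_le_excess hb)
    _ = infEDist x B + excess B D + ε := add_right_comm _ _ _

lemma excess_le_excess_add_excess : excess A D ≤ excess A B + excess B D :=
  excess_le_iff.2 fun x hx =>
    (infEDist_le_infEDist_add_excess x).trans (by gcongr; exact infEDist_le_excess hx)

lemma cthickening_subset_cthickening_of_excess_le {δ δ' : ℝ} (hδ : 0 ≤ δ) (hδ' : 0 ≤ δ')
    (h : excess A B ≤ ENNReal.ofReal δ') : cthickening δ A ⊆ cthickening (δ + δ') B := by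
  intro x hx
  rw [mem_cthickening_iff, ENNReal.ofReal_add hδ hδ'] at *
  exact (infEDist_le_infEDist_add_excess x).trans (add_le_add hx h)

lemma tendsto_nhds_zero_iff_subset {ι : Type*} {l : Filter ι} [l.NeBot] {f : ι → ℝ≥0∞}
    (hB : IsClosed B) (hf : Tendsto f l (𝓝 (excess A B))) : Tendsto f l (𝓝 0) ↔ A ⊆ B := by
  rw [← excess_eq_zero_iff_subset hB]
  exact ⟨tendsto_nhds_unique hf, fun h => h ▸ hf⟩

lemma toReal_excess_le_add (hAB : excess A B ≠ ⊤) (hBD : excess B D ≠ ⊤) :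
    (excess A D).toReal ≤ (excess A B).toReal + (excess B D).toReal := by
  rw [← ENNReal.toReal_add hAB hBD]
  exact ENNReal.toReal_mono (ENNReal.add_ne_top.2 ⟨hAB, hBD⟩) excess_le_excess_add_excess

lemma infDist_le_infDist_add_of_excess_le (hA : A.Nonempty) {δ : ℝ} (hδ : 0 ≤ δ)
    (h : excess A B ≤ ENNReal.ofReal δ) (x : E) : infDist x B ≤ infDist x A + δ := by
  have hle : infEDist x B ≤ infEDist x A + ENNReal.ofReal δ :=
    (infEDist_le_infEDist_add_excess x).trans (by gcongr)
  have hfin : infEDist x A + ENNReal.ofReal δ ≠ ⊤ :=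
    ENNReal.add_ne_top.2 ⟨infEDist_ne_top hA, ENNReal.ofReal_ne_top⟩
  simpa [infDist, ENNReal.toReal_add (infEDist_ne_top hA), hδ] using ENNReal.toReal_mono hfin hle

end Excess

section Convexity

variable {E : Type*} [NormedAddCommGroup E]

lemma convexOn_infDist [NormedSpace ℝ E] {K : Set E} (hK : Convex ℝ K) :
    ConvexOn ℝ univ (fun x => infDist x K) := by
  refine ⟨convex_univ, fun x _ y _ a b ha hb hab => ?_⟩
  rcases K.eq_empty_or_nonempty with rfl | hne
  · simp
  refine le_of_forall_pos_le_add fun ε hε => ?_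
  obtain ⟨p, hp, hxp⟩ := (infDist_lt_iff hne).1 (lt_add_of_pos_right (infDist x K) hε)
  obtain ⟨q, hq, hyq⟩ := (infDist_lt_iff hne).1 (lt_add_of_pos_right (infDist y K) hε)
  calc infDist (a • x + b • y) K ≤ ‖a • (x - p) + b • (y - q)‖ := by
        simpa [dist_eq_norm, smul_sub, sub_add_sub_comm] using
          infDist_le_dist_of_mem (x := a • x + b • y) (hK hp hq ha hb hab)
    _ ≤ a * dist x p + b * dist y q := by
        simpa [norm_smul, abs_of_nonneg ha, abs_of_nonneg hb, dist_eq_norm] using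
          norm_add_le (a • (x - p)) (b • (y - q))
    _ ≤ a * (infDist x K + ε) + b * (infDist y K + ε) := by gcongr
    _ = a • infDist x K + b • infDist y K + ε := by
        simp only [smul_eq_mul]; linear_combination ε * hab

lemma dist_sq_le_of_mem_convex [InnerProductSpace ℝ E] {K : Set E} (hK : Convex ℝ K)
    {p q : E} (hp : p ∈ K) (hq : q ∈ K) (x : E) :
    dist p q ^ 2 ≤ 2 * dist x p ^ 2 + 2 * dist x q ^ 2 - 4 * infDist x K ^ 2 := by
  have hmid : infDist x K ≤ ‖x - ((2⁻¹ : ℝ) • p + (2⁻¹ : ℝ) • q)‖ := by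
    simpa [dist_eq_norm] using infDist_le_dist_of_mem (x := x)
      (hK hp hq (by norm_num) (by norm_num) (by norm_num))
  have hpar := parallelogram_law_with_norm ℝ (x - p) (x - q)
  have hsum : x - p + (x - q) = (2 : ℝ) • (x - ((2⁻¹ : ℝ) • p + (2⁻¹ : ℝ) • q)) := by module
  rw [hsum, norm_smul, sub_sub_sub_cancel_left, Real.norm_two] at hpar
  rw [dist_eq_norm, dist_eq_norm, dist_eq_norm, norm_sub_rev p q]
  nlinarith [infDist_nonneg (x := x) (s := K)]

end Convexity

section InfDistLimits

variable {X : Type*} [PseudoMetricSpace X]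

lemma mem_cthickening_iff_infDist_le {K : Set X} (hK : K.Nonempty) {δ : ℝ} (hδ : 0 ≤ δ) {x : X} :
    x ∈ cthickening δ K ↔ infDist x K ≤ δ := by
  rw [mem_cthickening_iff, ← ENNReal.ofReal_toReal (infEDist_ne_top hK),
    ENNReal.ofReal_le_ofReal_iff hδ]
  rfl

lemma isClosed_setOf_tendsto_infDist {ι : Type*} (l : Filter ι) (K : ι → Set X) :
    IsClosed {x | Tendsto (fun i => infDist x (K i)) l (𝓝 0)} := by
  refine isClosed_of_closure_subset fun x hx => Metric.tendsto_nhds.2 fun ε hε => ?_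
  obtain ⟨y, hy, hxy⟩ := Metric.mem_closure_iff.1 hx (ε / 2) (half_pos hε)
  filter_upwards [Metric.tendsto_nhds.1 hy (ε / 2) (half_pos hε)] with i hi
  rw [Real.dist_0_eq_abs, abs_of_nonneg infDist_nonneg] at hi ⊢
  linarith [infDist_le_infDist_add_dist (x := x) (y := y) (s := K i)]

lemma convex_setOf_tendsto_infDist {E : Type*} [NormedAddCommGroup E] [NormedSpace ℝ E]
    {ι : Type*} {l : Filter ι} {K : ι → Set E} (hK : ∀ᶠ i in l, Convex ℝ (K i)) :
    Convex ℝ {x | Tendsto (fun i => infDist x (K i)) l (𝓝 0)} := by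
  intro x hx y hy a b ha hb hab
  refine squeeze_zero' (Eventually.of_forall fun _ => infDist_nonneg) ?_
    (by simpa using (hx.const_mul a).add (hy.const_mul b))
  filter_upwards [hK] with i hi
  exact (convexOn_infDist hi).2 (mem_univ x) (mem_univ y) ha hb hab

end InfDistLimits

section Hilbert

variable {E : Type*} [NormedAddCommGroup E] [InnerProductSpace ℝ E] [CompleteSpace E]

/-- The metric projections of `x` onto the `D n` form a Cauchy sequence by
`dist_sq_le_of_mem_convex`, because `infDist x (D n)` increases to a finite limit. -/
theorem exists_mem_iInter_dist_le {D : ℕ → Set E} (hD : Antitone D) (hne : ∀ n, (D n).Nonempty)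
    (hclosed : ∀ n, IsClosed (D n)) (hconv : ∀ n, Convex ℝ (D n)) {x : E} {R : ℝ}
    (hx : ∀ n, infDist x (D n) ≤ R) : ∃ y ∈ ⋂ n, D n, dist x y ≤ R := by
  set d := fun n => infDist x (D n)
  have hproj : ∀ n, ∃ p ∈ D n, dist x p = d n := fun n => by
    obtain ⟨p, hp, hxp⟩ := exists_norm_eq_iInf_of_complete_convex (hne n)
      (hclosed n).isComplete (hconv n) x
    exact ⟨p, hp, by simp only [d, dist_eq_norm, hxp, infDist_eq_iInf]⟩
  choose p hpD hpd using hproj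
  have hbdd : BddAbove (range d) := ⟨R, forall_mem_range.2 hx⟩
  set δ := ⨆ n, d n
  have hd_lim : Tendsto d atTop (𝓝 δ) :=
    tendsto_atTop_ciSup (fun n m hnm => infDist_le_infDist_of_subset (hD hnm) (hne m)) hbdd
  have hdist : ∀ n m, n ≤ m → dist (p n) (p m) ≤ √(2 * (δ ^ 2 - d n ^ 2)) := by
    intro n m hnm
    have h := dist_sq_le_of_mem_convex (hconv n) (hpD n) (hD hnm (hpD m)) x
    rw [hpd, hpd] at h
    have hdm : d m ≤ δ := le_ciSup hbdd m
    exact Real.le_sqrt_of_sq_le (by nlinarith [infDist_nonneg (x := x) (s := D m)])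
  have hlim : Tendsto (fun n => √(2 * (δ ^ 2 - d n ^ 2))) atTop (𝓝 0) := by
    have h := (((hd_lim.pow 2).const_sub (δ ^ 2)).const_mul 2).sqrt
    rwa [sub_self, mul_zero, Real.sqrt_zero] at h
  obtain ⟨y, hy⟩ := cauchySeq_tendsto_of_complete (cauchySeq_of_le_tendsto_0' _ hdist hlim)
  refine ⟨y, mem_iInter.2 fun n => (hclosed n).mem_of_tendsto hy
    (eventually_atTop.2 ⟨n, fun m hm => hD hm (hpD m)⟩), ?_⟩
  calc dist x y = δ :=
        tendsto_nhds_unique (tendsto_const_nhds.dist hy) (by simpa [hpd] using hd_lim)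
    _ ≤ R := ciSup_le hx

end Hilbert

section Chain

variable {X : Type*} [PseudoMetricSpace X] [CompleteSpace X]

theorem exists_dist_le_tendsto_infDist {K : ℕ → Set X} (hK : ∀ n, (K n).Nonempty) {a : ℕ → ℝ}
    {α : ℝ} (ha : Tendsto a atTop (𝓝 α))
    (hstep : ∀ n, ∀ z ∈ K n, infDist z (K (n + 1)) ≤ a (n + 1) - a n)
    {x : X} {c : ℝ} (hx : infDist x (K 0) ≤ a 0 - c) {ε : ℝ} (hε : 0 < ε) :
    ∃ y, dist x y ≤ α - c + ε ∧ Tendsto (fun n => infDist y (K n)) atTop (𝓝 0) := by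
  have haα : ∀ n, a n ≤ α := fun n => (monotone_nat_of_le_succ fun n => by
    obtain ⟨z, hz⟩ := hK n
    linarith [hstep n z hz, infDist_nonneg (x := z) (s := K (n + 1))]).ge_of_tendsto ha n
  obtain ⟨p₀, hp₀, hxp₀⟩ := (infDist_lt_iff (hK 0)).1
    (show infDist x (K 0) < a 0 - c + ε / 2 by linarith)
  have hnext : ∀ n, ∀ z ∈ K n, ∃ z' ∈ K (n + 1),
      dist z z' < a (n + 1) - a n + ε / 2 ^ (n + 2) := fun n z hz =>
    (infDist_lt_iff (hK (n + 1))).1 (by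
      have : 0 < ε / 2 ^ (n + 2) := by positivity
      linarith [hstep n z hz])
  choose! g hgK hgd using hnext
  let p : ℕ → X := fun n => Nat.rec p₀ (fun k z => g k z) n
  have hpK : ∀ n, p n ∈ K n := fun n => by
    induction n with
    | zero => exact hp₀
    | succ k ih => exact hgK k _ ih
  have hpd : ∀ n m, n ≤ m →
      dist (p n) (p m) ≤ a m - a n + (ε / 2 ^ (n + 1) - ε / 2 ^ (m + 1)) := by
    intro n m hnm
    induction m, hnm using Nat.le_induction with
    | base => simp
    | succ m _ ih =>
      calc dist (p n) (p (m + 1)) ≤ dist (p n) (p m) + dist (p m) (p (m + 1)) :=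
            dist_triangle _ _ _
        _ ≤ (a m - a n + (ε / 2 ^ (n + 1) - ε / 2 ^ (m + 1)))
            + (a (m + 1) - a m + ε / 2 ^ (m + 2)) := add_le_add ih (hgd m (p m) (hpK m)).le
        _ = a (m + 1) - a n + (ε / 2 ^ (n + 1) - ε / 2 ^ (m + 1 + 1)) := by ring
  set b : ℕ → ℝ := fun n => α - a n + ε / 2 ^ (n + 1)
  have hpb : ∀ n m, n ≤ m → dist (p n) (p m) ≤ b n := fun n m hnm => by
    have : 0 < ε / 2 ^ (m + 1) := by positivity
    linarith [hpd n m hnm, haα m]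
  have hb : Tendsto b atTop (𝓝 0) := by
    have h2 : Tendsto (fun n : ℕ => ε / 2 ^ (n + 1)) atTop (𝓝 0) :=
      tendsto_const_nhds.div_atTop
        ((tendsto_pow_atTop_atTop_of_one_lt one_lt_two).comp (tendsto_add_atTop_nat 1))
    simpa using ((tendsto_const_nhds (x := α)).sub ha).add h2
  obtain ⟨y, hy⟩ := cauchySeq_tendsto_of_complete (cauchySeq_of_le_tendsto_0' b hpb hb)
  have hpy : ∀ n, dist (p n) y ≤ b n := fun n =>
    le_of_tendsto (tendsto_const_nhds.dist hy) (eventually_atTop.2 ⟨n, hpb n⟩)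
  refine ⟨y, ?_, squeeze_zero (fun _ => infDist_nonneg)
    (fun n => (infDist_le_dist_of_mem (hpK n)).trans ((dist_comm _ _).trans_le (hpy n))) hb⟩
  calc dist x y ≤ dist x p₀ + dist p₀ y := dist_triangle _ _ _
    _ ≤ (a 0 - c + ε / 2) + b 0 := add_le_add hxp₀.le (hpy 0)
    _ = α - c + ε := by simp only [b]; ring

end Chain

section MonotoneLimits

variable {α β : Type*} [LinearOrder α] [TopologicalSpace α] [OrderTopology α]
  [ConditionallyCompleteLinearOrder β] [TopologicalSpace β] [OrderTopology β]
  {f : α → β} {S : Set α} {x : α}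

lemma MonotoneOn.tendsto_nhdsWithin_inter_Iio (hf : MonotoneOn f S)
    (hbdd : BddAbove (f '' (S ∩ Iio x))) :
    Tendsto f (𝓝[S ∩ Iio x] x) (𝓝 (sSup (f '' (S ∩ Iio x)))) := by
  rcases (S ∩ Iio x).eq_empty_or_nonempty with h | h
  · simp [h]
  refine tendsto_order.2 ⟨fun l hl => ?_, fun m hm => ?_⟩
  · obtain ⟨_, ⟨z, hz, rfl⟩, lz⟩ := exists_lt_of_lt_csSup (h.image f) hl
    filter_upwards [self_mem_nhdsWithin, nhdsWithin_le_nhds (Ioi_mem_nhds hz.2)] with w hw hzw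
    exact lz.trans_le (hf hz.1 hw.1 (le_of_lt hzw))
  · filter_upwards [self_mem_nhdsWithin] with w hw
    exact (le_csSup hbdd (mem_image_of_mem f hw)).trans_lt hm

lemma MonotoneOn.tendsto_nhdsWithin_inter_Ioi (hf : MonotoneOn f S)
    (hbdd : BddBelow (f '' (S ∩ Ioi x))) :
    Tendsto f (𝓝[S ∩ Ioi x] x) (𝓝 (sInf (f '' (S ∩ Ioi x)))) :=
  MonotoneOn.tendsto_nhdsWithin_inter_Iio (α := αᵒᵈ) (β := βᵒᵈ) hf.dual hbdd

end MonotoneLimits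

lemma tendsto_of_le_of_forall_sub_le {ι : Type*} {l : Filter ι} {f g : ι → ℝ} {c : ℝ}
    (hg : Tendsto g l (𝓝 c)) (hfg : ∀ᶠ i in l, f i ≤ g i)
    (hgf : ∀ ε > 0, ∀ᶠ i in l, g i - ε ≤ f i) : Tendsto f l (𝓝 c) := by
  refine tendsto_order.2 ⟨fun b hb => ?_, fun b hb => ?_⟩
  · filter_upwards [hgf ((c - b) / 2) (by linarith),
      hg.eventually (eventually_gt_nhds (show (b + c) / 2 < c by linarith))] with i h1 h2
    linarith
  · filter_upwards [hfg, hg.eventually (eventually_lt_nhds hb)] with i h1 h2 using h1.trans_lt h2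

section NhdsWithin

variable {I : Set ℝ} {t : ℝ}

lemma nhdsWithin_inter_Ioi_neBot (hI : I.OrdConnected) (ht : t ∈ I)
    (hne : (I ∩ Ioi t).Nonempty) : (𝓝[I ∩ Ioi t] t).NeBot := by
  obtain ⟨s, hs⟩ := hne
  refine neBot_of_le (f := 𝓝[>] t) ?_
  rw [← nhdsWithin_Ioo_eq_nhdsGT hs.2]
  exact nhdsWithin_mono _ fun r hr => ⟨hI.out ht hs.1 ⟨hr.1.le, hr.2.le⟩, hr.1⟩

lemma nhdsWithin_inter_Iio_neBot (hI : I.OrdConnected) (ht : t ∈ I)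
    (hne : (I ∩ Iio t).Nonempty) : (𝓝[I ∩ Iio t] t).NeBot := by
  obtain ⟨s, hs⟩ := hne
  refine neBot_of_le (f := 𝓝[<] t) ?_
  rw [← nhdsWithin_Ioo_eq_nhdsLT hs.2]
  exact nhdsWithin_mono _ fun r hr => ⟨hI.out hs.1 ht ⟨hr.1.le, hr.2.le⟩, hr.2⟩

end NhdsWithin

section FinSnoc

variable {α : Type*} {m : ℕ}

lemma strictMono_snoc [Preorder α] {v : Fin (m + 1) → α} (hv : StrictMono v) {c : α}
    (hc : v (Fin.last m) < c) : StrictMono (Fin.snoc v c : Fin (m + 2) → α) := by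
  refine Fin.strictMono_iff_lt_succ.2 fun i => ?_
  induction i using Fin.lastCases with
  | last => simpa using hc
  | cast i =>
    rw [Fin.succ_castSucc, Fin.snoc_castSucc, Fin.snoc_castSucc]
    exact hv Fin.castSucc_lt_succ

lemma snoc_mem {S : Set α} {v : Fin (m + 1) → α} (hv : ∀ i, v i ∈ S) {c : α} (hc : c ∈ S) :
    ∀ i, (Fin.snoc v c : Fin (m + 2) → α) i ∈ S :=
  Fin.lastCases (by simpa using hc) fun i => by simpa using hv i

end FinSnoc

section Retraction

variable {E : Type*} [NormedAddCommGroup E] {C : ℝ → Set E} {J : Set ℝ}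

lemma sum_le_ret {m : ℕ} {v : Fin (m + 1) → ℝ} (hv : StrictMono v) (hvJ : ∀ i, v i ∈ J) :
    ∑ i : Fin m, excess (C (v i.castSucc)) (C (v i.succ)) ≤ ret C J :=
  le_iSup_of_le m <| le_iSup_of_le v <| le_iSup_of_le hv <| le_iSup_of_le hvJ le_rfl

lemma sum_excess_snoc {m : ℕ} (v : Fin (m + 1) → ℝ) (c : ℝ) :
    ∑ i : Fin (m + 1), excess (C (Fin.snoc (α := fun _ => ℝ) v c i.castSucc))
        (C (Fin.snoc (α := fun _ => ℝ) v c i.succ))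
      = ∑ i : Fin m, excess (C (v i.castSucc)) (C (v i.succ))
        + excess (C (v (Fin.last m))) (C c) := by
  rw [Fin.sum_univ_castSucc]
  simp only [Fin.succ_castSucc, Fin.snoc_castSucc, Fin.succ_last, Fin.snoc_last]

lemma ret_le {c : ℝ≥0∞} (h : ∀ (m : ℕ) (v : Fin (m + 1) → ℝ), StrictMono v → (∀ i, v i ∈ J) →
      ∑ i : Fin m, excess (C (v i.castSucc)) (C (v i.succ)) ≤ c) :
    ret C J ≤ c :=
  iSup_le fun m => iSup_le fun v => iSup_le fun hv => iSup_le fun hvJ => h m v hv hvJ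

lemma ret_inter_Iic_add_excess_le {a b : ℝ} (ha : a ∈ J) (hb : b ∈ J) (hab : a ≤ b) :
    ret C (J ∩ Iic a) + excess (C a) (C b) ≤ ret C (J ∩ Iic b) := by
  rcases hab.eq_or_lt with rfl | hab
  · rw [excess_self, add_zero]
  have key : ∀ (m : ℕ) (v : Fin (m + 1) → ℝ), StrictMono v → (∀ i, v i ∈ J ∩ Iic a) →
      ∑ i : Fin m, excess (C (v i.castSucc)) (C (v i.succ)) + excess (C a) (C b)
        ≤ ret C (J ∩ Iic b) := by
    intro m v hv hvJ
    have hvb : ∀ i, v i ∈ J ∩ Iic b := fun i => ⟨(hvJ i).1, (mem_Iic.1 (hvJ i).2).trans hab.le⟩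
    rcases (mem_Iic.1 (hvJ (Fin.last m)).2).eq_or_lt with hlast | hlast
    · have h := sum_le_ret (C := C) (strictMono_snoc hv (hlast ▸ hab))
        (snoc_mem hvb ⟨hb, mem_Iic.2 le_rfl⟩)
      rwa [sum_excess_snoc, hlast] at h
    · -- insert `a` before appending `b`; this can only increase the sum
      have hva := strictMono_snoc hv hlast
      have h := sum_le_ret (C := C) (strictMono_snoc hva (by simpa using hab))
        (snoc_mem (snoc_mem hvb ⟨ha, mem_Iic.2 hab.le⟩) ⟨hb, mem_Iic.2 le_rfl⟩)
      rw [sum_excess_snoc, Fin.snoc_last, sum_excess_snoc] at h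
      exact le_trans (by gcongr; exact le_self_add) h
  have he : excess (C a) (C b) ≤ ret C (J ∩ Iic b) := by
    simpa using key 0 (fun _ => a) (Fin.strictMono_iff_lt_succ.2 fun i => i.elim0)
      fun _ => ⟨ha, mem_Iic.2 le_rfl⟩
  rcases eq_or_ne (ret C (J ∩ Iic b)) ⊤ with htop | htop
  · simp [htop]
  calc ret C (J ∩ Iic a) + excess (C a) (C b)
      ≤ (ret C (J ∩ Iic b) - excess (C a) (C b)) + excess (C a) (C b) := by
        gcongr
        exact ret_le fun m v hv hvJ =>
          ENNReal.le_sub_of_add_le_right (ne_top_of_le_ne_top htop he) (key m v hv hvJ)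
    _ = ret C (J ∩ Iic b) := tsub_add_cancel_of_le he

end Retraction

section Chains

variable {E : Type*} [NormedAddCommGroup E] {C : ℝ → Set E} {J : Set ℝ} {u : ℕ → ℝ} {t : ℝ}

/-- The sums in the definition of `ret`, along monotone rather than strictly monotone
sequences. -/
noncomputable def excessSum (C : ℝ → Set E) (u : ℕ → ℝ) (m : ℕ) : ℝ≥0∞ :=
  ∑ i ∈ Finset.range m, excess (C (u i)) (C (u (i + 1)))

lemma excessSum_zero : excessSum C u 0 = 0 := Finset.sum_range_zero _

lemma excessSum_succ (m : ℕ) :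
    excessSum C u (m + 1) = excessSum C u m + excess (C (u m)) (C (u (m + 1))) :=
  Finset.sum_range_succ _ _

lemma excessSum_le_ret_inter_Iic (hu : Monotone u) (huJ : ∀ i, u i ∈ J) (m : ℕ) :
    excessSum C u m ≤ ret C (J ∩ Iic (u m)) := by
  induction m with
  | zero => simp [excessSum_zero]
  | succ m ih =>
    rw [excessSum_succ]
    calc excessSum C u m + excess (C (u m)) (C (u (m + 1)))
        ≤ ret C (J ∩ Iic (u m)) + excess (C (u m)) (C (u (m + 1))) := by gcongr
      _ ≤ ret C (J ∩ Iic (u (m + 1))) :=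
        ret_inter_Iic_add_excess_le (huJ m) (huJ (m + 1)) (hu m.le_succ)

lemma exists_excessSum_gt_of_lt_ret {c : ℝ≥0∞} (h : c < ret C J) :
    ∃ (m : ℕ) (u : ℕ → ℝ), Monotone u ∧ (∀ i, u i ∈ J) ∧ c < excessSum C u m := by
  obtain ⟨m, v, hv, hvJ, hc⟩ : ∃ (m : ℕ) (v : Fin (m + 1) → ℝ), StrictMono v ∧ (∀ i, v i ∈ J) ∧
      c < ∑ i : Fin m, excess (C (v i.castSucc)) (C (v i.succ)) := by
    simpa only [ret, lt_iSup_iff, exists_prop] using h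
  refine ⟨m, fun j => v ⟨min j m, Nat.lt_succ_of_le (min_le_right j m)⟩,
    fun i j hij => hv.monotone (Fin.mk_le_mk.2 (min_le_min_right m hij)), fun j => hvJ _,
    hc.trans_eq ?_⟩
  rw [excessSum, ← Fin.sum_univ_eq_sum_range]
  refine Finset.sum_congr rfl fun i _ => ?_
  simp only [min_eq_left i.isLt.le, min_eq_left (Nat.succ_le_of_lt i.isLt)]
  rfl

/-- Splitting a chain at its first point beyond `t`. -/
lemma exists_ret_inter_Iic_add_excessSum_le (hu : Monotone u) (huJ : ∀ i, u i ∈ J) (ht : t ∈ J)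
    {m : ℕ} (htm : t < u m) :
    ∃ r ∈ J ∩ Ioc t (u m), ret C (J ∩ Iic r) + excessSum C u m
      ≤ ret C (J ∩ Iic t) + excess (C t) (C r) + ret C (J ∩ Iic (u m)) := by
  induction m with
  | zero => exact ⟨u 0, ⟨huJ 0, htm, le_rfl⟩, by rw [excessSum_zero, add_zero]; exact le_add_self⟩
  | succ m ih =>
    rcases le_or_gt (u m) t with hmt | hmt
    · refine ⟨u (m + 1), ⟨huJ _, htm, le_rfl⟩, ?_⟩
      rw [add_comm (ret C _) (excessSum C u _)]
      gcongr
      calc excessSum C u (m + 1)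
          ≤ ret C (J ∩ Iic (u m)) + (excess (C (u m)) (C t) + excess (C t) (C (u (m + 1)))) := by
            rw [excessSum_succ]
            exact add_le_add (excessSum_le_ret_inter_Iic hu huJ m) excess_le_excess_add_excess
        _ ≤ ret C (J ∩ Iic t) + excess (C t) (C (u (m + 1))) := by
            rw [← add_assoc]
            gcongr
            exact ret_inter_Iic_add_excess_le (huJ m) ht hmt
    · obtain ⟨r, hr, hle⟩ := ih hmt
      refine ⟨r, ⟨hr.1, hr.2.1, hr.2.2.trans (hu m.le_succ)⟩, ?_⟩
      calc ret C (J ∩ Iic r) + excessSum C u (m + 1)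
          = ret C (J ∩ Iic r) + excessSum C u m + excess (C (u m)) (C (u (m + 1))) := by
            rw [excessSum_succ, add_assoc]
        _ ≤ ret C (J ∩ Iic t) + excess (C t) (C r) + ret C (J ∩ Iic (u m))
            + excess (C (u m)) (C (u (m + 1))) := by gcongr
        _ ≤ ret C (J ∩ Iic t) + excess (C t) (C r) + ret C (J ∩ Iic (u (m + 1))) := by
            rw [add_assoc]
            gcongr
            exact ret_inter_Iic_add_excess_le (huJ m) (huJ (m + 1)) (hu m.le_succ)

/-- Splitting a chain ending at `t` at its last point before `t`. -/
lemma exists_excessSum_le_ret_inter_Iic_add_excess (hu : Monotone u) (huJ : ∀ i, u i ∈ J)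
    {m : ℕ} (hmt : u m ≤ t) (hpos : excessSum C u m ≠ 0) :
    ∃ r ∈ J ∩ Iio t, excessSum C u m ≤ ret C (J ∩ Iic r) + excess (C r) (C t) := by
  induction m with
  | zero => exact absurd excessSum_zero hpos
  | succ m ih =>
    rcases hmt.lt_or_eq with hlt | heq
    · exact ⟨u (m + 1), ⟨huJ _, hlt⟩, (excessSum_le_ret_inter_Iic hu huJ _).trans le_self_add⟩
    rcases (heq ▸ hu m.le_succ : u m ≤ t).lt_or_eq with hlt' | heq'
    · refine ⟨u m, ⟨huJ m, hlt'⟩, ?_⟩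
      rw [excessSum_succ, heq]
      gcongr
      exact excessSum_le_ret_inter_Iic hu huJ m
    · have hsame : excessSum C u (m + 1) = excessSum C u m := by
        rw [excessSum_succ, heq, heq', excess_self, add_zero]
      rw [hsame] at hpos ⊢
      exact ih heq'.le hpos

end Chains

structure IsRetractionFunction {E : Type*} [NormedAddCommGroup E] (C : ℝ → Set E) (I : Set ℝ)
    (L : ℝ → ℝ) : Prop where
  nonneg : ∀ t ∈ I, 0 ≤ L t
  ofReal_eq : ∀ t ∈ I, ENNReal.ofReal (L t) = ret C (I ∩ Iic t)

namespace IsRetractionFunction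

variable {E : Type*} [NormedAddCommGroup E] {C : ℝ → Set E} {I : Set ℝ} {L : ℝ → ℝ}
  {a b r s t ε : ℝ}

lemma ofReal_add_excess_le (hL : IsRetractionFunction C I L) (ha : a ∈ I) (hb : b ∈ I)
    (hab : a ≤ b) : ENNReal.ofReal (L a) + excess (C a) (C b) ≤ ENNReal.ofReal (L b) := by
  rw [hL.ofReal_eq a ha, hL.ofReal_eq b hb]
  exact ret_inter_Iic_add_excess_le ha hb hab

lemma monotoneOn (hL : IsRetractionFunction C I L) : MonotoneOn L I := fun _ ha b hb hab =>
  (ENNReal.ofReal_le_ofReal_iff (hL.nonneg b hb)).1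
    (le_self_add.trans (hL.ofReal_add_excess_le ha hb hab))

lemma excess_le (hL : IsRetractionFunction C I L) (ha : a ∈ I) (hb : b ∈ I) (hab : a ≤ b) :
    excess (C a) (C b) ≤ ENNReal.ofReal (L b - L a) := by
  rw [ENNReal.ofReal_sub _ (hL.nonneg a ha)]
  exact ENNReal.le_sub_of_add_le_left ENNReal.ofReal_ne_top (hL.ofReal_add_excess_le ha hb hab)

lemma excess_ne_top (hL : IsRetractionFunction C I L) (ha : a ∈ I) (hb : b ∈ I) (hab : a ≤ b) :
    excess (C a) (C b) ≠ ⊤ :=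
  ne_top_of_le_ne_top ENNReal.ofReal_ne_top (hL.excess_le ha hb hab)

lemma toReal_excess_le (hL : IsRetractionFunction C I L) (ha : a ∈ I) (hb : b ∈ I)
    (hab : a ≤ b) : (excess (C a) (C b)).toReal ≤ L b - L a := by
  simpa [sub_nonneg.2 (hL.monotoneOn ha hb hab)] using
    ENNReal.toReal_mono ENNReal.ofReal_ne_top (hL.excess_le ha hb hab)

lemma infDist_le_infDist_add (hL : IsRetractionFunction C I L) (ha : a ∈ I) (hb : b ∈ I)
    (hab : a ≤ b) (hCa : (C a).Nonempty) (x : E) :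
    infDist x (C b) ≤ infDist x (C a) + (L b - L a) :=
  infDist_le_infDist_add_of_excess_le hCa (sub_nonneg.2 (hL.monotoneOn ha hb hab))
    (hL.excess_le ha hb hab) x

lemma excessSum_le (hL : IsRetractionFunction C I L) {u : ℕ → ℝ} (hu : Monotone u)
    (huI : ∀ i, u i ∈ I) (m : ℕ) : excessSum C u m ≤ ENNReal.ofReal (L (u m)) := by
  rw [hL.ofReal_eq _ (huI m)]
  exact excessSum_le_ret_inter_Iic hu huI m

lemma exists_sub_lt_toReal_excess_add_of_lt (hL : IsRetractionFunction C I L) (ht : t ∈ I)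
    (hs : s ∈ I) (hts : t < s) (hε : 0 < ε) :
    ∃ r ∈ I ∩ Ioc t s, L r - L t < (excess (C t) (C r)).toReal + ε := by
  rcases lt_or_ge (L s - L t) ε with hsmall | hbig
  · exact ⟨s, ⟨hs, hts, le_rfl⟩, by linarith [(excess (C t) (C s)).toReal_nonneg]⟩
  have hLt := hL.nonneg t ht
  have hlt : ENNReal.ofReal (L s - ε) < ret C (I ∩ Iic s) := by
    rw [← hL.ofReal_eq s hs]
    exact (ENNReal.ofReal_lt_ofReal_iff (by linarith)).2 (by linarith)
  obtain ⟨m, u, hu, huI, hsum⟩ := exists_excessSum_gt_of_lt_ret hlt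
  have huI' : ∀ i, u i ∈ I := fun i => (huI i).1
  have htm : t < u m := by
    by_contra! h
    have := (ENNReal.ofReal_lt_ofReal_iff'.1 (hsum.trans_le (hL.excessSum_le hu huI' m))).1
    linarith [hL.monotoneOn (huI' m) ht h]
  obtain ⟨r, hr, hle⟩ := exists_ret_inter_Iic_add_excessSum_le (C := C) hu huI' ht htm
  rw [← hL.ofReal_eq r hr.1, ← hL.ofReal_eq t ht, ← hL.ofReal_eq _ (huI' m)] at hle
  refine ⟨r, ⟨hr.1, hr.2.1, hr.2.2.trans (huI m).2⟩, ?_⟩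
  have key : ENNReal.ofReal (L r) + ENNReal.ofReal (L s - ε)
      < ENNReal.ofReal (L t) + ENNReal.ofReal (excess (C t) (C r)).toReal
        + ENNReal.ofReal (L s) := by
    rw [ENNReal.ofReal_toReal (hL.excess_ne_top ht hr.1 hr.2.1.le)]
    calc _ < ENNReal.ofReal (L r) + excessSum C u m :=
          ENNReal.add_lt_add_left ENNReal.ofReal_ne_top hsum
      _ ≤ _ := hle.trans (by gcongr; exact hL.monotoneOn (huI' m) hs (huI m).2)
  rw [← ENNReal.ofReal_add (hL.nonneg r hr.1) (by linarith),
    ← ENNReal.ofReal_add hLt ENNReal.toReal_nonneg,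
    ← ENNReal.ofReal_add (by positivity) (hL.nonneg s hs)] at key
  linarith [(ENNReal.ofReal_lt_ofReal_iff'.1 key).1]

lemma exists_sub_lt_toReal_excess_add_of_gt (hL : IsRetractionFunction C I L) (ht : t ∈ I)
    (hs : s ∈ I) (hst : s < t) (hε : 0 < ε) :
    ∃ r ∈ I ∩ Iio t, L t - L r < (excess (C r) (C t)).toReal + ε := by
  rcases lt_or_ge (L t) ε with hsmall | hbig
  · exact ⟨s, ⟨hs, hst⟩, by linarith [hL.nonneg s hs, (excess (C s) (C t)).toReal_nonneg]⟩
  have hlt : ENNReal.ofReal (L t - ε) < ret C (I ∩ Iic t) := by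
    rw [← hL.ofReal_eq t ht]
    exact (ENNReal.ofReal_lt_ofReal_iff (by linarith)).2 (by linarith)
  obtain ⟨m, u, hu, huI, hsum⟩ := exists_excessSum_gt_of_lt_ret hlt
  obtain ⟨r, hr, hle⟩ := exists_excessSum_le_ret_inter_Iic_add_excess hu (fun i => (huI i).1)
    (huI m).2 (ne_bot_of_gt hsum)
  rw [← hL.ofReal_eq r hr.1, ← ENNReal.ofReal_toReal (hL.excess_ne_top hr.1 ht hr.2.le),
    ← ENNReal.ofReal_add (hL.nonneg r hr.1) ENNReal.toReal_nonneg] at hle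
  refine ⟨r, hr, ?_⟩
  linarith [(ENNReal.ofReal_lt_ofReal_iff'.1 (hsum.trans_le hle)).1]

lemma bddBelow_image_inter_Ioi (hL : IsRetractionFunction C I L) (ht : t ∈ I) :
    BddBelow (L '' (I ∩ Ioi t)) :=
  ⟨L t, forall_mem_image.2 fun _ hr => hL.monotoneOn ht hr.1 hr.2.le⟩

lemma bddAbove_image_inter_Iio (hL : IsRetractionFunction C I L) (ht : t ∈ I) :
    BddAbove (L '' (I ∩ Iio t)) :=
  ⟨L t, forall_mem_image.2 fun _ hr => hL.monotoneOn hr.1 ht hr.2.le⟩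

lemma tendsto_nhdsWithin_inter_Ioi (hL : IsRetractionFunction C I L) (ht : t ∈ I) :
    Tendsto L (𝓝[I ∩ Ioi t] t) (𝓝 (sInf (L '' (I ∩ Ioi t)))) :=
  hL.monotoneOn.tendsto_nhdsWithin_inter_Ioi (hL.bddBelow_image_inter_Ioi ht)

lemma tendsto_nhdsWithin_inter_Iio (hL : IsRetractionFunction C I L) (ht : t ∈ I) :
    Tendsto L (𝓝[I ∩ Iio t] t) (𝓝 (sSup (L '' (I ∩ Iio t)))) :=
  hL.monotoneOn.tendsto_nhdsWithin_inter_Iio (hL.bddAbove_image_inter_Iio ht)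

lemma tendsto_excess_nhdsWithin_inter_Ioi (hL : IsRetractionFunction C I L) (ht : t ∈ I)
    (hne : (I ∩ Ioi t).Nonempty) :
    Tendsto (fun r => excess (C t) (C r)) (𝓝[I ∩ Ioi t] t)
      (𝓝 (ENNReal.ofReal (sInf (L '' (I ∩ Ioi t)) - L t))) := by
  have hreal : Tendsto (fun r => (excess (C t) (C r)).toReal) (𝓝[I ∩ Ioi t] t)
      (𝓝 (sInf (L '' (I ∩ Ioi t)) - L t)) := by
    refine tendsto_of_le_of_forall_sub_le ((hL.tendsto_nhdsWithin_inter_Ioi ht).sub_const _) ?_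
      fun ε hε => ?_
    · filter_upwards [self_mem_nhdsWithin] with r hr using hL.toReal_excess_le ht hr.1 hr.2.le
    obtain ⟨s, hs⟩ := hne
    obtain ⟨u, hu, hlt⟩ := hL.exists_sub_lt_toReal_excess_add_of_lt ht hs.1 hs.2 hε
    filter_upwards [self_mem_nhdsWithin, nhdsWithin_le_nhds (Iio_mem_nhds hu.2.1)]
      with r hr hru
    linarith [toReal_excess_le_add (hL.excess_ne_top ht hr.1 hr.2.le)
      (hL.excess_ne_top hr.1 hu.1 (le_of_lt hru)), hL.toReal_excess_le hr.1 hu.1 (le_of_lt hru)]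
  refine (ENNReal.tendsto_ofReal hreal).congr' ?_
  filter_upwards [self_mem_nhdsWithin] with r hr
  exact ENNReal.ofReal_toReal (hL.excess_ne_top ht hr.1 hr.2.le)

lemma tendsto_excess_nhdsWithin_inter_Iio (hL : IsRetractionFunction C I L) (ht : t ∈ I)
    (hne : (I ∩ Iio t).Nonempty) :
    Tendsto (fun r => excess (C r) (C t)) (𝓝[I ∩ Iio t] t)
      (𝓝 (ENNReal.ofReal (L t - sSup (L '' (I ∩ Iio t))))) := by
  have hreal : Tendsto (fun r => (excess (C r) (C t)).toReal) (𝓝[I ∩ Iio t] t)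
      (𝓝 (L t - sSup (L '' (I ∩ Iio t)))) := by
    refine tendsto_of_le_of_forall_sub_le
      (tendsto_const_nhds.sub (hL.tendsto_nhdsWithin_inter_Iio ht)) ?_ fun ε hε => ?_
    · filter_upwards [self_mem_nhdsWithin] with r hr using hL.toReal_excess_le hr.1 ht hr.2.le
    obtain ⟨s, hs⟩ := hne
    obtain ⟨u, hu, hlt⟩ := hL.exists_sub_lt_toReal_excess_add_of_gt ht hs.1 hs.2 hε
    filter_upwards [self_mem_nhdsWithin, nhdsWithin_le_nhds (Ioi_mem_nhds hu.2)]
      with r hr hur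
    linarith [toReal_excess_le_add (hL.excess_ne_top hu.1 hr.1 (le_of_lt hur))
      (hL.excess_ne_top hr.1 ht hr.2.le), hL.toReal_excess_le hu.1 hr.1 (le_of_lt hur)]
  refine (ENNReal.tendsto_ofReal hreal).congr' ?_
  filter_upwards [self_mem_nhdsWithin] with r hr
  exact ENNReal.ofReal_toReal (hL.excess_ne_top hr.1 ht hr.2.le)

lemma setOf_tendsto_nhdsWithin_inter_Ioi_eq (hL : IsRetractionFunction C I L)
    (hI : I.OrdConnected) (hC : ∀ r ∈ I, (C r).Nonempty) (ht : t ∈ I)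
    (hne : (I ∩ Ioi t).Nonempty) :
    {x | Tendsto (fun s => infDist x (C s)) (𝓝[I ∩ Ioi t] t) (𝓝 0)}
      = ⋂ r ∈ I ∩ Ioi t, cthickening (L r - sInf (L '' (I ∩ Ioi t))) (C r) := by
  have hlim := hL.tendsto_nhdsWithin_inter_Ioi ht
  have hgap : ∀ r ∈ I ∩ Ioi t, 0 ≤ L r - sInf (L '' (I ∩ Ioi t)) := fun r hr =>
    sub_nonneg.2 (csInf_le (hL.bddBelow_image_inter_Ioi ht) (mem_image_of_mem L hr))
  have := nhdsWithin_inter_Ioi_neBot hI ht hne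
  ext x
  simp only [mem_ofPred_eq, mem_iInter₂]
  refine ⟨fun hx r hr => ?_, fun hx => ?_⟩
  · rw [mem_cthickening_iff_infDist_le (hC r hr.1) (hgap r hr)]
    refine ge_of_tendsto (by simpa using hx.add (tendsto_const_nhds.sub hlim)) ?_
    filter_upwards [self_mem_nhdsWithin, nhdsWithin_le_nhds (Iio_mem_nhds hr.2)] with p hp hpr
    exact hL.infDist_le_infDist_add hp.1 hr.1 (le_of_lt hpr) (hC p hp.1) x
  · refine squeeze_zero' (Eventually.of_forall fun _ => infDist_nonneg) ?_
      (by simpa using hlim.sub_const (sInf (L '' (I ∩ Ioi t))))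
    filter_upwards [self_mem_nhdsWithin] with r hr
    exact (mem_cthickening_iff_infDist_le (hC r hr.1) (hgap r hr)).1 (hx r hr)

lemma exists_mem_iInter_cthickening_dist_le [InnerProductSpace ℝ E] [CompleteSpace E]
    (hL : IsRetractionFunction C I L)
    (hI : I.OrdConnected) (hC : ∀ r ∈ I, IsConvexBody (C r)) (ht : t ∈ I)
    (hne : (I ∩ Ioi t).Nonempty) {x : E} (hx : x ∈ C t) :
    ∃ y ∈ ⋂ r ∈ I ∩ Ioi t, cthickening (L r - sInf (L '' (I ∩ Ioi t))) (C r),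
      dist x y ≤ sInf (L '' (I ∩ Ioi t)) - L t := by
  set ℓ := sInf (L '' (I ∩ Ioi t))
  have hgap : ∀ r ∈ I ∩ Ioi t, 0 ≤ L r - ℓ := fun r hr =>
    sub_nonneg.2 (csInf_le (hL.bddBelow_image_inter_Ioi ht) (mem_image_of_mem L hr))
  have hjump : 0 ≤ ℓ - L t :=
    sub_nonneg.2 (le_csInf (hne.image L) (forall_mem_image.2 fun _ hr =>
      hL.monotoneOn ht hr.1 hr.2.le))
  have hsub : ∀ r ∈ I ∩ Ioi t, ∀ r' ∈ I, r ≤ r' →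
      cthickening (L r - ℓ) (C r) ⊆ cthickening (L r' - ℓ) (C r') := fun r hr r' hr' hrr' => by
    simpa using cthickening_subset_cthickening_of_excess_le (hgap r hr)
      (sub_nonneg.2 (hL.monotoneOn hr.1 hr' hrr')) (hL.excess_le hr.1 hr' hrr')
  obtain ⟨s, hs⟩ := hne
  obtain ⟨σ, hσ_anti, hσ_mem, hσ_lim⟩ := exists_seq_strictAnti_tendsto' (mem_Ioi.1 hs.2)
  have hσ : ∀ n, σ n ∈ I ∩ Ioi t := fun n =>
    ⟨hI.out ht hs.1 ⟨(hσ_mem n).1.le, (hσ_mem n).2.le⟩, (hσ_mem n).1⟩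
  set D := fun n => cthickening (L (σ n) - ℓ) (C (σ n))
  have hDne : ∀ n, (D n).Nonempty := fun n =>
    (hC _ (hσ n).1).1.mono (self_subset_cthickening _)
  have hxD : ∀ n, infDist x (D n) ≤ ℓ - L t := fun n => by
    rw [← mem_cthickening_iff_infDist_le (hDne n) hjump,
      cthickening_cthickening hjump (hgap _ (hσ n)), mem_cthickening_iff]
    calc infEDist x (C (σ n)) ≤ excess (C t) (C (σ n)) := infEDist_le_excess hx
      _ ≤ ENNReal.ofReal (L (σ n) - L t) := hL.excess_le ht (hσ n).1 (hσ n).2.le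
      _ = ENNReal.ofReal (ℓ - L t + (L (σ n) - ℓ)) := by ring_nf
  obtain ⟨y, hy, hxy⟩ := exists_mem_iInter_dist_le
    (fun n m hnm => hsub _ (hσ m) _ (hσ n).1 (hσ_anti.antitone hnm)) hDne
    (fun _ => isClosed_cthickening) (fun n => (hC _ (hσ n).1).2.2.cthickening _) hxD
  refine ⟨y, mem_iInter₂.2 fun r hr => ?_, hxy⟩
  obtain ⟨n, hn⟩ := (hσ_lim.eventually (eventually_lt_nhds hr.2)).exists
  exact hsub _ (hσ n) r hr.1 hn.le (mem_iInter.1 hy n)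

lemma excess_iInter_cthickening_eq [InnerProductSpace ℝ E] [CompleteSpace E]
    (hL : IsRetractionFunction C I L) (hI : I.OrdConnected) (hC : ∀ r ∈ I, IsConvexBody (C r))
    (ht : t ∈ I) (hne : (I ∩ Ioi t).Nonempty) :
    excess (C t) (⋂ r ∈ I ∩ Ioi t, cthickening (L r - sInf (L '' (I ∩ Ioi t))) (C r))
      = ENNReal.ofReal (sInf (L '' (I ∩ Ioi t)) - L t) := by
  have := nhdsWithin_inter_Ioi_neBot hI ht hne
  have hLlim := hL.tendsto_nhdsWithin_inter_Ioi ht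
  set ℓ := sInf (L '' (I ∩ Ioi t))
  set A := ⋂ r ∈ I ∩ Ioi t, cthickening (L r - ℓ) (C r)
  refine le_antisymm (excess_le_iff.2 fun x hx => ?_) ?_
  · obtain ⟨y, hy, hxy⟩ := hL.exists_mem_iInter_cthickening_dist_le hI hC ht hne hx
    exact (infEDist_le_edist_of_mem hy).trans
      (by rw [edist_dist]; exact ENNReal.ofReal_le_ofReal hxy)
  have hlim : Tendsto (fun r => excess (C t) A + ENNReal.ofReal (L r - ℓ)) (𝓝[I ∩ Ioi t] t)
      (𝓝 (excess (C t) A)) := by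
    simpa using (tendsto_const_nhds (x := excess (C t) A)).add
      (ENNReal.tendsto_ofReal (hLlim.sub_const ℓ))
  refine le_of_tendsto_of_tendsto (hL.tendsto_excess_nhdsWithin_inter_Ioi ht hne) hlim ?_
  filter_upwards [self_mem_nhdsWithin] with r hr
  refine (excess_le_excess_add_excess (B := A)).trans ?_
  gcongr
  exact excess_le_iff.2 fun y hy => mem_iInter₂.1 hy r hr

theorem rightLimSetOn_spec [InnerProductSpace ℝ E] [CompleteSpace E]
    (hL : IsRetractionFunction C I L)
    (hI : I.OrdConnected) (hC : ∀ r ∈ I, IsConvexBody (C r)) (ht : t ∈ I) :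
    IsConvexBody (rightLimSetOn C I t) ∧
      (excess (C t) (rightLimSetOn C I t) = ENNReal.ofReal (rlimOn L I t - L t) ∧
        Tendsto (fun s => excess (C t) (C s)) (𝓝[I ∩ Ioi t] t)
          (𝓝 (ENNReal.ofReal (rlimOn L I t - L t)))) ∧
      (Tendsto (fun s => excess (C t) (C s)) (𝓝[I ∩ Ioi t] t) (𝓝 0) ↔
        C t ⊆ rightLimSetOn C I t) := by
  by_cases hne : (I ∩ Ioi t).Nonempty
  swap
  · have hbot : 𝓝[I ∩ Ioi t] t = ⊥ := by rw [not_nonempty_iff_eq_empty.1 hne, nhdsWithin_empty]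
    simp only [rightLimSetOn, rlimOn, if_neg hne, sub_self, ENNReal.ofReal_zero, excess_self,
      hbot, tendsto_bot, subset_refl, iff_self, and_true]
    exact hC t ht
  rw [rightLimSetOn, rlimOn, if_pos hne, if_pos hne,
    hL.setOf_tendsto_nhdsWithin_inter_Ioi_eq hI (fun r hr => (hC r hr).1) ht hne]
  have := nhdsWithin_inter_Ioi_neBot hI ht hne
  have hT := hL.tendsto_excess_nhdsWithin_inter_Ioi ht hne
  have heq := hL.excess_iInter_cthickening_eq hI hC ht hne
  have hA : IsConvexBody (⋂ r ∈ I ∩ Ioi t, cthickening (L r - sInf (L '' (I ∩ Ioi t))) (C r)) := by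
    obtain ⟨x, hx⟩ := (hC t ht).1
    obtain ⟨y, hy, -⟩ := hL.exists_mem_iInter_cthickening_dist_le hI hC ht hne hx
    exact ⟨⟨y, hy⟩, isClosed_biInter fun _ _ => isClosed_cthickening,
      convex_iInter₂ fun r hr => (hC r hr.1).2.2.cthickening _⟩
  exact ⟨hA, ⟨heq, hT⟩, tendsto_nhds_zero_iff_subset hA.2.1 (heq ▸ hT)⟩

lemma exists_tendsto_nhdsWithin_inter_Iio_dist_le [CompleteSpace E]
    (hL : IsRetractionFunction C I L) (hI : I.OrdConnected) (hC : ∀ s ∈ I, (C s).Nonempty)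
    (ht : t ∈ I) (hr : r ∈ I ∩ Iio t) {z : E} (hz : z ∈ C r) {ε : ℝ} (hε : 0 < ε) :
    ∃ y, Tendsto (fun s => infDist y (C s)) (𝓝[I ∩ Iio t] t) (𝓝 0) ∧
      dist z y ≤ sSup (L '' (I ∩ Iio t)) - L r + ε := by
  set ℓ := sSup (L '' (I ∩ Iio t))
  obtain ⟨σ, hσ_mono, hσ_mem, hσ_lim⟩ := exists_seq_strictMono_tendsto' (mem_Iio.1 hr.2)
  have hσ : ∀ n, σ n ∈ I ∩ Iio t := fun n =>
    ⟨hI.out hr.1 ht ⟨(hσ_mem n).1.le, (hσ_mem n).2.le⟩, (hσ_mem n).2⟩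
  have hσ_lim' : Tendsto σ atTop (𝓝[I ∩ Iio t] t) :=
    tendsto_nhdsWithin_iff.2 ⟨hσ_lim, Eventually.of_forall hσ⟩
  have hLσ : Tendsto (fun n => L (σ n)) atTop (𝓝 ℓ) :=
    (hL.tendsto_nhdsWithin_inter_Iio ht).comp hσ_lim'
  have hstep : ∀ n, ∀ w ∈ C (σ n), infDist w (C (σ (n + 1))) ≤ L (σ (n + 1)) - L (σ n) :=
    fun n w hw => by
      simpa [infDist_zero_of_mem hw] using hL.infDist_le_infDist_add (hσ n).1 (hσ (n + 1)).1
        (hσ_mono (Nat.lt_succ_self n)).le (hC _ (hσ n).1) w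
  have hz0 : infDist z (C (σ 0)) ≤ L (σ 0) - L r := by
    simpa [infDist_zero_of_mem hz] using
      hL.infDist_le_infDist_add hr.1 (hσ 0).1 (hσ_mem 0).1.le (hC r hr.1) z
  obtain ⟨y, hzy, hy⟩ := exists_dist_le_tendsto_infDist (fun n => hC _ (hσ n).1) hLσ hstep hz0 hε
  refine ⟨y, Metric.tendsto_nhds.2 fun δ hδ => ?_, hzy⟩
  -- past `σ n`, the distance to `C s` exceeds the one to `C (σ n)` by at most `ℓ - L (σ n)`
  obtain ⟨n, hn⟩ := ((hy.add (tendsto_const_nhds.sub hLσ)).eventually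
    (eventually_lt_nhds (show 0 + (ℓ - ℓ) < δ by simpa using hδ))).exists
  filter_upwards [self_mem_nhdsWithin, nhdsWithin_le_nhds (Ioi_mem_nhds (hσ n).2)] with s hs hσs
  rw [Real.dist_0_eq_abs, abs_of_nonneg infDist_nonneg]
  linarith [hL.infDist_le_infDist_add (hσ n).1 hs.1 (le_of_lt hσs) (hC _ (hσ n).1) y,
    le_csSup (hL.bddAbove_image_inter_Iio ht) (mem_image_of_mem L hs)]

lemma excess_setOf_tendsto_nhdsWithin_inter_Iio_le [CompleteSpace E]
    (hL : IsRetractionFunction C I L) (hI : I.OrdConnected) (hC : ∀ s ∈ I, (C s).Nonempty)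
    (ht : t ∈ I) (hr : r ∈ I ∩ Iio t) :
    excess (C r) {x | Tendsto (fun s => infDist x (C s)) (𝓝[I ∩ Iio t] t) (𝓝 0)}
      ≤ ENNReal.ofReal (sSup (L '' (I ∩ Iio t)) - L r) := by
  refine excess_le_iff.2 fun z hz => ENNReal.le_of_forall_pos_le_add fun ε hε _ => ?_
  obtain ⟨y, hy, hzy⟩ :=
    hL.exists_tendsto_nhdsWithin_inter_Iio_dist_le hI hC ht hr hz (NNReal.coe_pos.2 hε)
  calc infEDist z _ ≤ edist z y := infEDist_le_edist_of_mem hy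
    _ ≤ ENNReal.ofReal (sSup (L '' (I ∩ Iio t)) - L r + ε) := by
      rw [edist_dist]; exact ENNReal.ofReal_le_ofReal hzy
    _ ≤ ENNReal.ofReal (sSup (L '' (I ∩ Iio t)) - L r) + ε := by
      rw [← ENNReal.ofReal_coe_nnreal]; exact ENNReal.ofReal_add_le

lemma excess_setOf_tendsto_nhdsWithin_inter_Iio_eq [CompleteSpace E]
    (hL : IsRetractionFunction C I L) (hI : I.OrdConnected) (hC : ∀ s ∈ I, (C s).Nonempty)
    (ht : t ∈ I) (hne : (I ∩ Iio t).Nonempty) :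
    excess {x | Tendsto (fun s => infDist x (C s)) (𝓝[I ∩ Iio t] t) (𝓝 0)} (C t)
      = ENNReal.ofReal (L t - sSup (L '' (I ∩ Iio t))) := by
  have := nhdsWithin_inter_Iio_neBot hI ht hne
  have hLlim := hL.tendsto_nhdsWithin_inter_Iio ht
  have hjump : 0 ≤ L t - sSup (L '' (I ∩ Iio t)) :=
    sub_nonneg.2 (csSup_le (hne.image L) (forall_mem_image.2 fun _ hr =>
      hL.monotoneOn hr.1 ht hr.2.le))
  set ℓ := sSup (L '' (I ∩ Iio t))
  set A := {x | Tendsto (fun s => infDist x (C s)) (𝓝[I ∩ Iio t] t) (𝓝 0)}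
  refine le_antisymm (excess_le_iff.2 fun y hy => ?_) ?_
  · refine (mem_cthickening_iff_infDist_le (hC t ht) hjump).2 (ge_of_tendsto
      (by simpa using hy.add (tendsto_const_nhds.sub hLlim)) ?_)
    filter_upwards [self_mem_nhdsWithin] with p hp
    exact hL.infDist_le_infDist_add hp.1 ht hp.2.le (hC p hp.1) y
  have hlim : Tendsto (fun r => ENNReal.ofReal (ℓ - L r) + excess A (C t)) (𝓝[I ∩ Iio t] t)
      (𝓝 (excess A (C t))) := by
    simpa using (ENNReal.tendsto_ofReal ((tendsto_const_nhds (x := ℓ)).sub hLlim)).add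
      (tendsto_const_nhds (x := excess A (C t)))
  refine le_of_tendsto_of_tendsto (hL.tendsto_excess_nhdsWithin_inter_Iio ht hne) hlim ?_
  filter_upwards [self_mem_nhdsWithin] with r hr
  refine (excess_le_excess_add_excess (B := A)).trans ?_
  gcongr
  exact hL.excess_setOf_tendsto_nhdsWithin_inter_Iio_le hI hC ht hr

theorem leftLimSetOn_spec [InnerProductSpace ℝ E] [CompleteSpace E]
    (hL : IsRetractionFunction C I L)
    (hI : I.OrdConnected) (hC : ∀ r ∈ I, IsConvexBody (C r)) (ht : t ∈ I) :
    IsConvexBody (leftLimSetOn C I t) ∧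
      (excess (leftLimSetOn C I t) (C t) = ENNReal.ofReal (L t - llimOn L I t) ∧
        Tendsto (fun s => excess (C s) (C t)) (𝓝[I ∩ Iio t] t)
          (𝓝 (ENNReal.ofReal (L t - llimOn L I t)))) ∧
      (Tendsto (fun s => excess (C s) (C t)) (𝓝[I ∩ Iio t] t) (𝓝 0) ↔
        leftLimSetOn C I t ⊆ C t) := by
  by_cases hne : (I ∩ Iio t).Nonempty
  swap
  · have hbot : 𝓝[I ∩ Iio t] t = ⊥ := by rw [not_nonempty_iff_eq_empty.1 hne, nhdsWithin_empty]
    simp only [leftLimSetOn, llimOn, if_neg hne, sub_self, ENNReal.ofReal_zero, excess_self,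
      hbot, tendsto_bot, subset_refl, iff_self, and_true]
    exact hC t ht
  rw [leftLimSetOn, llimOn, if_pos hne, if_pos hne]
  have := nhdsWithin_inter_Iio_neBot hI ht hne
  have hCne : ∀ r ∈ I, (C r).Nonempty := fun r hr => (hC r hr).1
  have hT := hL.tendsto_excess_nhdsWithin_inter_Iio ht hne
  have heq := hL.excess_setOf_tendsto_nhdsWithin_inter_Iio_eq hI hCne ht hne
  have hA : IsConvexBody {x | Tendsto (fun s => infDist x (C s)) (𝓝[I ∩ Iio t] t) (𝓝 0)} := by
    obtain ⟨r, hr⟩ := hne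
    obtain ⟨z, hz⟩ := hCne r hr.1
    obtain ⟨y, hy, -⟩ := hL.exists_tendsto_nhdsWithin_inter_Iio_dist_le hI hCne ht hr hz one_pos
    exact ⟨⟨y, hy⟩, isClosed_setOf_tendsto_infDist _ _,
      convex_setOf_tendsto_infDist (eventually_nhdsWithin_of_forall fun r hr => (hC r hr.1).2.2)⟩
  exact ⟨hA, ⟨heq, hT⟩, tendsto_nhds_zero_iff_subset (hC t ht).2.1 (heq ▸ hT)⟩

end IsRetractionFunction

theorem one_sided_limits_bounded_retraction_general
    [CompleteSpace H]
    (I : Set ℝ) (hI : I.OrdConnected)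
    (C : ℝ → Set H) (hC : ∀ t ∈ I, IsConvexBody (C t))
    (L : ℝ → ℝ) (hL0 : ∀ t ∈ I, 0 ≤ L t)
    (hL : ∀ t ∈ I, ENNReal.ofReal (L t) = ret C (I ∩ Iic t)) :
    ∀ t ∈ I,
      (IsConvexBody (rightLimSetOn C I t) ∧ IsConvexBody (leftLimSetOn C I t)) ∧
      (excess (C t) (rightLimSetOn C I t) = ENNReal.ofReal (rlimOn L I t - L t) ∧
        Tendsto (fun s => excess (C t) (C s)) (𝓝[I ∩ Ioi t] t)
          (𝓝 (ENNReal.ofReal (rlimOn L I t - L t)))) ∧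
      (excess (leftLimSetOn C I t) (C t) = ENNReal.ofReal (L t - llimOn L I t) ∧
        Tendsto (fun s => excess (C s) (C t)) (𝓝[I ∩ Iio t] t)
          (𝓝 (ENNReal.ofReal (L t - llimOn L I t)))) ∧
      ((Tendsto (fun s => excess (C t) (C s)) (𝓝[I ∩ Ioi t] t) (𝓝 0) ↔
          C t ⊆ rightLimSetOn C I t) ∧
        (Tendsto (fun s => excess (C s) (C t)) (𝓝[I ∩ Iio t] t) (𝓝 0) ↔
          leftLimSetOn C I t ⊆ C t)) := by
  intro t ht
  have hret : IsRetractionFunction C I L := ⟨hL0, hL⟩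
  obtain ⟨hRbody, hRexcess, hRiff⟩ := hret.rightLimSetOn_spec hI hC ht
  obtain ⟨hLbody, hLexcess, hLiff⟩ := hret.leftLimSetOn_spec hI hC ht
  exact ⟨⟨hRbody, hLbody⟩, hRexcess, hLexcess, hRiff, hLiff⟩

/-- One-sided limits of a moving set `C : I → Conv_H` of locally bounded retraction:
`C(t+)` and `C(t−)` are nonempty closed convex sets,
`e(C(t),C(t+)) = lim_{s→t+} e(C(t),C(s)) = ℓ_C(t+) − ℓ_C(t)` and
`e(C(t−),C(t)) = lim_{s→t−} e(C(s),C(t)) = ℓ_C(t) − ℓ_C(t−)` (here `L = ℓ_C`), and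
consequently `lim_{s→t+} e(C(t),C(s)) = 0 ↔ C(t) ⊆ C(t+)` and
`lim_{s→t−} e(C(s),C(t)) = 0 ↔ C(t−) ⊆ C(t)`. -/
theorem one_sided_limits_bounded_retraction
    [CompleteSpace H]
    (I : Set ℝ) (hI : I.OrdConnected) (hIne : I.Nonempty)
    (C : ℝ → Set H) (hC : ∀ t ∈ I, IsConvexBody (C t))
    (hret : ∀ c d : ℝ, Icc c d ⊆ I → ret C (Icc c d) ≠ ⊤)
    (L : ℝ → ℝ) (hL0 : ∀ t ∈ I, 0 ≤ L t)
    (hL : ∀ t ∈ I, ENNReal.ofReal (L t) = ret C (I ∩ Iic t)) :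
    ∀ t ∈ I,
      (IsConvexBody (rightLimSetOn C I t) ∧ IsConvexBody (leftLimSetOn C I t)) ∧
      (excess (C t) (rightLimSetOn C I t) = ENNReal.ofReal (rlimOn L I t - L t) ∧
        Tendsto (fun s => excess (C t) (C s)) (𝓝[I ∩ Ioi t] t)
          (𝓝 (ENNReal.ofReal (rlimOn L I t - L t)))) ∧
      (excess (leftLimSetOn C I t) (C t) = ENNReal.ofReal (L t - llimOn L I t) ∧
        Tendsto (fun s => excess (C s) (C t)) (𝓝[I ∩ Iio t] t)
          (𝓝 (ENNReal.ofReal (L t - llimOn L I t)))) ∧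
      ((Tendsto (fun s => excess (C t) (C s)) (𝓝[I ∩ Ioi t] t) (𝓝 0) ↔
          C t ⊆ rightLimSetOn C I t) ∧
        (Tendsto (fun s => excess (C s) (C t)) (𝓝[I ∩ Iio t] t) (𝓝 0) ↔
          leftLimSetOn C I t ⊆ C t)) :=
  one_sided_limits_bounded_retraction_general I hI C hC L hL0 hL
end
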